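/- arXiv:1904.03638 — 3 statements merged into one kernel-verified Lean document; each statement's English description precedes it below -/
import Mathlib

section
/- If P is a 2-neighborly polytope with vertex set X and x is a vertex of P, then the convex hull of X \ {x} is also a 2-neighborly polytope. -/
/-- `X` spans a 2-neighborly polytope: every pair of distinct points of `X`
forms an edge (1-face) of `conv X`, where a face is an extreme subset. -/
def TwoNeighborly {d : ℕ} (X : Set (Fin d → ℝ)) : Prop :=
  ∀ u ∈ X, ∀ v ∈ X, u ≠ v → IsExtreme ℝ (convexHull ℝ X) (segment ℝ u v)

/-- If `P = conv X` is a 2-neighborly polytope with vertex set `X` and `x ∈ X`,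
then `conv (X \ {x})` is also 2-neighborly. -/
theorem stmt0 {d : ℕ} (X : Set (Fin d → ℝ)) (hfin : X.Finite)
    (hvert : X = (convexHull ℝ X).extremePoints ℝ)
    (h2n : TwoNeighborly X) (x : Fin d → ℝ) (hx : x ∈ X) :
    ∀ u ∈ (convexHull ℝ (X \ {x})).extremePoints ℝ,
      ∀ v ∈ (convexHull ℝ (X \ {x})).extremePoints ℝ, u ≠ v →
        IsExtreme ℝ (convexHull ℝ (X \ {x})) (segment ℝ u v) := by
  intro u hu v hv huv
  have hu' : u ∈ X \ {x} := extremePoints_convexHull_subset hu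
  have hv' : v ∈ X \ {x} := extremePoints_convexHull_subset hv
  have hbig : IsExtreme ℝ (convexHull ℝ X) (segment ℝ u v) :=
    h2n u hu'.1 v hv'.1 huv
  have hsub : convexHull ℝ (X \ {x}) ⊆ convexHull ℝ X :=
    convexHull_mono Set.diff_subset
  constructor
  · exact (convex_convexHull ℝ _).segment_subset
      (subset_convexHull ℝ _ hu') (subset_convexHull ℝ _ hv')
  · intro a ha b hb c hc
    exact hbig.2 (hsub ha) (hsub hb) hc
end

section
/- Let X \subseteq {0,1}^d with 0 \in X and let y \in X, y \neq 0. Then {0, y} is an edge of conv(X) if and only if {0, y} is an edge of conv(Z \cup {0, y}), where Z = { z \in X : z AND y = z, z \neq 0, z \neq y } and AND denotes coordinatewise minimum. -/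
/-- The set of vertices of the 0/1-cube in `ℝ^d`. -/
def cubeVerts (d : ℕ) : Set (Fin d → ℝ) := {x | ∀ i, x i = 0 ∨ x i = 1}

lemma cube_nonneg {d : ℕ} {X : Set (Fin d → ℝ)} (hX : X ⊆ cubeVerts d)
    {x : Fin d → ℝ} (hx : x ∈ convexHull ℝ X) (i : Fin d) : 0 ≤ x i := by
  have hconv : Convex ℝ {x : Fin d → ℝ | 0 ≤ x i} := by
    intro a ha b hb s t hs ht hst
    simp only [Set.mem_setOf_eq] at *
    have : (s • a + t • b) i = s * a i + t * b i := rfl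
    rw [this]
    exact add_nonneg (mul_nonneg hs ha) (mul_nonneg ht hb)
  refine convexHull_min (fun z hz => ?_) hconv hx
  rcases hX hz i with h | h <;> simp [Set.mem_setOf_eq, h]

lemma hull_face {d : ℕ} {X : Set (Fin d → ℝ)} (hX : X ⊆ cubeVerts d)
    (y : Fin d → ℝ) {x : Fin d → ℝ} (hx : x ∈ convexHull ℝ X)
    (hxH : ∀ i, y i = 0 → x i = 0) :
    x ∈ convexHull ℝ (X ∩ {z | ∀ i, y i = 0 → z i = 0}) := by
  rw [convexHull_eq] at hx
  obtain ⟨ι, t, w, z, hw0, hw1, hzX, hcm⟩ := hx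
  have hcm' : ∑ j ∈ t, w j • z j = x := by
    rw [← hcm, Finset.centerMass_eq_of_sum_1 _ _ hw1]
  set t' : Finset ι := t.filter (fun j => w j ≠ 0) with ht'
  have hsub : t' ⊆ t := Finset.filter_subset _ _
  have hw1' : ∑ j ∈ t', w j = 1 := by
    rw [← hw1]
    exact Finset.sum_filter_of_ne (fun j _ h => h)
  have hsum' : ∑ j ∈ t', w j • z j = x := by
    rw [← hcm']
    exact Finset.sum_filter_of_ne (fun j _ h => fun hw => h (by simp [hw]))
  -- each z j for j ∈ t' lies in the face
  have hzface : ∀ j ∈ t', z j ∈ X ∩ {z | ∀ i, y i = 0 → z i = 0} := by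
    intro j hj
    refine ⟨hzX j (hsub hj), fun i hyi => ?_⟩
    have hx0 : ∑ k ∈ t, w k * z k i = 0 := by
      have := congrFun hcm' i
      rw [Finset.sum_apply] at this
      simpa [hxH i hyi] using this
    have hterm : ∀ k ∈ t, 0 ≤ w k * z k i := by
      intro k hk
      have : 0 ≤ z k i := by rcases hX (hzX k hk) i with h | h <;> simp [h]
      exact mul_nonneg (hw0 k hk) this
    have := (Finset.sum_eq_zero_iff_of_nonneg hterm).1 hx0 j (hsub hj)
    have hwj : w j ≠ 0 := (Finset.mem_filter.1 hj).2
    rcases mul_eq_zero.1 this with h | h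
    · exact absurd h hwj
    · exact h
  rw [← hsum', ← Finset.centerMass_eq_of_sum_1 _ _ hw1']
  exact Finset.centerMass_mem_convexHull _ (fun j hj => hw0 j (hsub hj))
    (by rw [hw1']; norm_num) hzface

/-- `{0, y}` is an edge of `conv X` iff it is an edge of `conv (Z ∪ {0, y})`,
where `Z = {z ∈ X : z AND y = z, z ≠ 0, z ≠ y}` (AND is coordinatewise min). -/
theorem stmt3 {d : ℕ} (X : Set (Fin d → ℝ)) (hX : X ⊆ cubeVerts d)
    (h0 : (0 : Fin d → ℝ) ∈ X) (y : Fin d → ℝ) (hy : y ∈ X) (hy0 : y ≠ 0) :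
    IsExtreme ℝ (convexHull ℝ X) (segment ℝ 0 y) ↔
      IsExtreme ℝ
        (convexHull ℝ
          ({z ∈ X | (∀ i, min (z i) (y i) = z i) ∧ z ≠ 0 ∧ z ≠ y} ∪ {0, y}))
        (segment ℝ 0 y) := by
  have hYeq : {z ∈ X | (∀ i, min (z i) (y i) = z i) ∧ z ≠ 0 ∧ z ≠ y} ∪ {0, y}
      = X ∩ {z | ∀ i, y i = 0 → z i = 0} := by
    ext z
    constructor
    · rintro (⟨hzX, hmin, _, _⟩ | hz)
      · refine ⟨hzX, fun i hyi => ?_⟩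
        have h1 : z i ≤ y i := min_eq_left_iff.1 (hmin i)
        have h2 : 0 ≤ z i := by rcases hX hzX i with h | h <;> simp [h]
        rw [hyi] at h1
        linarith
      · rcases hz with rfl | rfl
        · exact ⟨h0, fun i _ => rfl⟩
        · exact ⟨hy, fun i h => h⟩
    · rintro ⟨hzX, hzH⟩
      by_cases hz0 : z = 0
      · exact Or.inr (Or.inl hz0)
      by_cases hzy : z = y
      · exact Or.inr (Or.inr hzy)
      refine Or.inl ⟨hzX, fun i => ?_, hz0, hzy⟩
      rcases hX hzX i with h | h
      · rw [h]
        exact min_eq_left (by rcases hX hy i with h' | h' <;> simp [h'])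
      · rcases hX hy i with h' | h'
        · exact absurd (hzH i h') (by rw [h]; norm_num)
        · rw [h, h']
          simp
  rw [hYeq]
  have hmemH : ∀ {x1 x2 x : Fin d → ℝ}, x1 ∈ convexHull ℝ X → x2 ∈ convexHull ℝ X →
      x ∈ segment ℝ 0 y → x ∈ openSegment ℝ x1 x2 →
      x1 ∈ convexHull ℝ (X ∩ {z | ∀ i, y i = 0 → z i = 0}) ∧
      x2 ∈ convexHull ℝ (X ∩ {z | ∀ i, y i = 0 → z i = 0}) := by
    intro x1 x2 x hx1 hx2 hxs hxo
    obtain ⟨a, b, ha, hb, hab, hsum⟩ := hxo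
    obtain ⟨u, v, hu, hv, huv, hxseg⟩ := hxs
    have hxH : ∀ i, y i = 0 → x i = 0 := by
      intro i hyi
      have : x i = u * 0 + v * y i := congrFun hxseg.symm i |>.trans rfl
      simp [this, hyi]
    have key : ∀ i, y i = 0 → x1 i = 0 ∧ x2 i = 0 := by
      intro i hyi
      have h1 : 0 ≤ x1 i := cube_nonneg hX hx1 i
      have h2 : 0 ≤ x2 i := cube_nonneg hX hx2 i
      have hsum' : a * x1 i + b * x2 i = 0 := by
        have := congrFun hsum i
        rw [hxH i hyi] at this
        exact this
      constructor <;> nlinarith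
    exact ⟨hull_face hX y hx1 (fun i h => (key i h).1),
           hull_face hX y hx2 (fun i h => (key i h).2)⟩
  constructor
  · intro hE
    refine ⟨segment_subset_convexHull ⟨h0, fun i _ => rfl⟩ ⟨hy, fun i h => h⟩, ?_⟩
    intro x1 hx1 x2 hx2 x hxs hxo
    exact hE.2 (convexHull_mono Set.inter_subset_left hx1)
      (convexHull_mono Set.inter_subset_left hx2) hxs hxo
  · intro hE
    refine ⟨segment_subset_convexHull h0 hy, ?_⟩
    intro x1 hx1 x2 hx2 x hxs hxo
    obtain ⟨h1, h2⟩ := hmemH hx1 hx2 hxs hxo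
    exact hE.2 h1 h2 hxs hxo
end

section
/- Let X \subseteq {0,1}^d with 0 \in X and y \in X, y \neq 0. Then the segment {0, y} is an edge of conv(X) if and only if y does not belong to the conical hull cone(Z) of Z = { z \in X : z \leq y coordinatewise, z \neq 0, z \neq y }. -/
/-- The conical hull of a set `Z ⊆ ℝ^d`: all finite nonnegative combinations. -/
def coneHull {d : ℕ} (Z : Set (Fin d → ℝ)) : Set (Fin d → ℝ) :=
  {x | ∃ (s : Finset (Fin d → ℝ)) (lam : (Fin d → ℝ) → ℝ),
        ↑s ⊆ Z ∧ (∀ z ∈ s, 0 ≤ lam z) ∧ x = ∑ z ∈ s, lam z • z}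

/-!
A face of `conv X` contains every point of `X` that carries positive weight in a convex
combination lying in the face. If `y = ∑ λ_z z` with `z ∈ Z`, a coordinate where `y` is `1`
forces `∑ λ_z ≥ 1`, so `y / ∑ λ_z` lies on the segment `[0, y]`, and then so does each `z`; but
the only 0/1-points of that segment are `0` and `y`.

Conversely, a point of `X` that is not below `y` cannot occur with positive weight in a conical
representation of `y`, so `y ∉ cone(Z)` gives `y ∉ cone(X ∖ {0, y})`. Separating `y / |y|₁`
from the normalised points `z / |z|₁` then yields a linear form vanishing at `0` and `y` and
negative on the rest of `X`; where it attains its maximum `0` on `conv X` is a face, namely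
`conv {0, y}`.
-/

section Faces

open Finset

variable {𝕜 E : Type*} [Field 𝕜] [LinearOrder 𝕜] [IsStrictOrderedRing 𝕜] [AddCommGroup E]
  [Module 𝕜 E]

theorem IsExtreme.mem_of_centerMass_mem {ι : Type*} {A B : Set E}
    (hAB : IsExtreme 𝕜 A B) (hA : Convex 𝕜 A) {t : Finset ι} {w : ι → 𝕜} {z : ι → E}
    (hw : ∀ i ∈ t, 0 ≤ w i) (hz : ∀ i ∈ t, z i ∈ A) (hB : t.centerMass w z ∈ B)
    {j : ι} (hj : j ∈ t) (hwj : 0 < w j) : z j ∈ B := by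
  classical
  have hrest : ∀ i ∈ t.erase j, 0 ≤ w i := fun i hi => hw i (mem_of_mem_erase hi)
  rcases (sum_nonneg hrest).eq_or_lt with hzero | hpos
  · have hcm : t.centerMass w z = z j := by
      rw [← centerMass_subset z (singleton_subset_iff.2 hj), centerMass_singleton _ _ hwj.ne']
      intro i hi hij
      exact (sum_eq_zero_iff_of_nonneg hrest).1 hzero.symm i (mem_erase.2 ⟨by simpa using hij, hi⟩)
    rwa [hcm] at hB
  · rw [← insert_erase hj, centerMass_insert j (t.erase j) z (notMem_erase j t) hpos.ne'] at hB
    refine hAB.left_mem_of_mem_openSegment (hz j hj)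
      (hA.centerMass_mem hrest hpos fun i hi => hz i (mem_of_mem_erase hi)) hB ?_
    exact ⟨_, _, div_pos hwj (by positivity), div_pos hpos (by positivity),
      by field_simp, rfl⟩

theorem IsExtreme.subset_convexHull_inter {s B : Set E}
    (h : IsExtreme 𝕜 (convexHull 𝕜 s) B) : B ⊆ convexHull 𝕜 (B ∩ s) := by
  classical
  intro x hx
  obtain ⟨ι, t, w, z, hw, hw1, hz, rfl⟩ := (convexHull_eq s).subset (h.1 hx)
  rw [← centerMass_filter_ne_zero] at hx ⊢
  refine centerMass_mem_convexHull _ (fun i hi => hw i (mem_filter.1 hi).1) ?_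
    fun i hi => ⟨?_, hz i (mem_filter.1 hi).1⟩
  · rw [sum_filter_ne_zero, hw1]; exact one_pos
  · obtain ⟨hit, hwi⟩ := mem_filter.1 hi
    exact h.mem_of_centerMass_mem (convex_convexHull 𝕜 s)
      (fun i hi => hw i (mem_filter.1 hi).1)
      (fun i hi => subset_convexHull 𝕜 s (hz i (mem_filter.1 hi).1)) hx hi
      ((hw i hit).lt_of_ne' hwi)

theorem isExtreme_setOf_eq_of_forall_le {A : Set E} (l : E →ₗ[𝕜] 𝕜) {c : 𝕜}
    (hl : ∀ x ∈ A, l x ≤ c) : IsExtreme 𝕜 A {x ∈ A | l x = c} := by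
  refine ⟨fun x hx => hx.1, ?_⟩
  rintro x₁ hx₁ x₂ hx₂ x ⟨-, hx⟩ ⟨a, b, ha, hb, hab, rfl⟩
  rw [map_add, map_smul, map_smul, smul_eq_mul, smul_eq_mul] at hx
  have h₁ := hl x₁ hx₁
  have h₂ := hl x₂ hx₂
  have hc : c = a * c + b * c := by rw [← add_mul, hab, one_mul]
  have : a * c ≤ a * l x₁ := by linarith [mul_le_mul_of_nonneg_left h₂ hb.le]
  exact Set.mem_sep hx₁ (h₁.antisymm (le_of_mul_le_mul_left this ha))

theorem isExtreme_convexHull_of_forall_le {s : Set E} (l : E →ₗ[𝕜] 𝕜) {c : 𝕜}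
    (hl : ∀ x ∈ s, l x ≤ c) :
    IsExtreme 𝕜 (convexHull 𝕜 s) (convexHull 𝕜 {x ∈ s | l x = c}) := by
  have hface := isExtreme_setOf_eq_of_forall_le l
    fun x hx => convexHull_min hl (convex_halfSpace_le l.isLinear c) hx
  convert hface using 1
  refine (convexHull_min (fun x hx => Set.mem_sep (subset_convexHull 𝕜 s hx.1) hx.2)
    ((convex_convexHull 𝕜 s).inter (convex_hyperplane l.isLinear c))).antisymm ?_
  exact hface.subset_convexHull_inter.trans
    (convexHull_mono fun x hx => ⟨hx.2, hx.1.2⟩)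

end Faces

theorem coneHull_eq_hull {d : ℕ} (S : Set (Fin d → ℝ)) :
    coneHull S = PointedCone.hull ℝ S := by
  refine Set.ext fun x => ⟨?_, fun h => ?_⟩
  · rintro ⟨s, lam, hs, hlam, rfl⟩
    exact Submodule.sum_mem _ fun z hz =>
      PointedCone.smul_mem _ (hlam z hz) (PointedCone.subset_hull (hs hz))
  · obtain ⟨c, hc, hc₀, rfl⟩ := PointedCone.mem_hull_set.1 h
    exact ⟨c.support, c, hc, fun z _ => hc₀ z, rfl⟩

theorem exists_linearMap_eq_zero_and_neg_of_notMem_hull {E : Type*} [TopologicalSpace E]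
    [AddCommGroup E] [Module ℝ E] [IsTopologicalAddGroup E] [ContinuousSMul ℝ E]
    [LocallyConvexSpace ℝ E] [T2Space E] (σ : E →ₗ[ℝ] ℝ) {S : Set E} (hS : S.Finite)
    (hσS : ∀ z ∈ S, 0 < σ z) {y : E} (hσy : 0 < σ y) (hy : y ∉ PointedCone.hull ℝ S) :
    ∃ l : E →ₗ[ℝ] ℝ, l y = 0 ∧ ∀ z ∈ S, l z < 0 := by
  set normalize : E → E := fun x => (σ x)⁻¹ • x
  have hσ_normalize : ∀ x, 0 < σ x → σ (normalize x) = 1 := fun x hx => by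
    simp [normalize, hx.ne']
  have hsep : normalize y ∉ convexHull ℝ (normalize '' S) := by
    refine fun h => hy ?_
    have hle : convexHull ℝ (normalize '' S) ⊆ PointedCone.hull ℝ S :=
      convexHull_min (Set.image_subset_iff.2 fun z hz => (PointedCone.hull ℝ S).smul_mem
        (inv_nonneg.2 (hσS z hz).le) (PointedCone.subset_hull hz)) (PointedCone.convex _)
    have := (PointedCone.hull ℝ S).smul_mem hσy.le (hle h)
    rwa [smul_inv_smul₀ hσy.ne'] at this
  obtain ⟨f, u, hfS, hfy⟩ := geometric_hahn_banach_closed_point (convex_convexHull ℝ _)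
    ((hS.image normalize).isCompact_convexHull (𝕜 := ℝ)).isClosed hsep
  have hscale : ∀ x, 0 < σ x → ∀ l : E →ₗ[ℝ] ℝ, l x = σ x * l (normalize x) := fun x hx l => by
    rw [l.map_smul, smul_eq_mul, mul_inv_cancel_left₀ hx.ne']
  refine ⟨f.toLinearMap - f (normalize y) • σ, ?_, fun z hz => ?_⟩
  · rw [hscale y hσy]
    simp [hσ_normalize y hσy]
  · rw [hscale z (hσS z hz)]
    refine mul_neg_of_pos_of_neg (hσS z hz) ?_
    simp only [LinearMap.sub_apply, LinearMap.smul_apply, ContinuousLinearMap.coe_coe,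
      hσ_normalize z (hσS z hz), smul_eq_mul, mul_one, sub_neg]
    exact (hfS _ (subset_convexHull ℝ _ (Set.mem_image_of_mem normalize hz))).trans hfy

section CubeVertices

open Finset

variable {d : ℕ} {x y : Fin d → ℝ}

theorem nonneg_of_mem_cubeVerts (hx : x ∈ cubeVerts d) (i : Fin d) : 0 ≤ x i := by
  rcases hx i with h | h <;> simp [h]

theorem le_one_of_mem_cubeVerts (hx : x ∈ cubeVerts d) (i : Fin d) : x i ≤ 1 := by
  rcases hx i with h | h <;> simp [h]

theorem exists_eq_one_of_mem_cubeVerts (hx : x ∈ cubeVerts d) (hx0 : x ≠ 0) : ∃ i, x i = 1 := by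
  by_contra! h
  exact hx0 (funext fun i => (hx i).resolve_right (h i))

theorem sum_pos_of_mem_cubeVerts (hx : x ∈ cubeVerts d) (hx0 : x ≠ 0) : 0 < ∑ i, x i := by
  obtain ⟨i, hi⟩ := exists_eq_one_of_mem_cubeVerts hx hx0
  calc (0 : ℝ) < x i := hi ▸ one_pos
    _ ≤ ∑ i, x i := single_le_sum (fun j _ => nonneg_of_mem_cubeVerts hx j) (mem_univ i)

theorem cubeVerts_finite : (cubeVerts d).Finite :=
  (Set.Finite.pi fun _ => Set.toFinite {0, 1}).subset fun _ hx i _ => hx i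

theorem eq_zero_or_eq_of_mem_segment_of_mem_cubeVerts (hx : x ∈ cubeVerts d)
    (hy : y ∈ cubeVerts d) (h : x ∈ segment ℝ 0 y) : x = 0 ∨ x = y := by
  obtain ⟨a, b, -, -, -, rfl⟩ := h
  rcases eq_or_ne y 0 with rfl | hy0
  · simp
  obtain ⟨i, hi⟩ := exists_eq_one_of_mem_cubeVerts hy hy0
  have hb : b = 0 ∨ b = 1 := by simpa [hi] using hx i
  rcases hb with rfl | rfl <;> simp

theorem mem_coneHull_sep_le_of_mem_coneHull {S : Set (Fin d → ℝ)} (hS : S ⊆ cubeVerts d)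
    (hy : y ∈ cubeVerts d) (h : y ∈ coneHull S) : y ∈ coneHull {z ∈ S | ∀ i, z i ≤ y i} := by
  obtain ⟨s, lam, hs, hlam, hys⟩ := h
  have hle : ∀ z ∈ s, lam z • z ≠ 0 → ∀ i, z i ≤ y i := by
    intro z hz hne i
    by_contra! hlt
    have hzi : z i = 1 ∧ y i = 0 :=
      ⟨(hS (hs hz) i).resolve_left fun h => by linarith [nonneg_of_mem_cubeVerts hy i],
        (hy i).resolve_right fun h => by linarith [le_one_of_mem_cubeVerts (hS (hs hz)) i]⟩
    have : lam z ≤ y i := calc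
      lam z = lam z * z i := by rw [hzi.1, mul_one]
      _ ≤ ∑ z' ∈ s, lam z' * z' i := single_le_sum (fun z' hz' =>
          mul_nonneg (hlam z' hz') (nonneg_of_mem_cubeVerts (hS (hs hz')) i)) hz
      _ = y i := by simp [hys, Finset.sum_apply]
    exact hne (by rw [le_antisymm (this.trans hzi.2.le) (hlam z hz), zero_smul])
  refine ⟨{z ∈ s | ∀ i, z i ≤ y i}, lam, fun z hz => ?_, fun z hz => hlam z (mem_filter.1 hz).1, ?_⟩
  · obtain ⟨hzs, hzle⟩ := mem_filter.1 hz
    exact ⟨hs hzs, hzle⟩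
  · rwa [sum_filter_of_ne hle]

theorem notMem_coneHull_of_isExtreme_segment {X S : Set (Fin d → ℝ)} (hX : X ⊆ cubeVerts d)
    (hy : y ∈ cubeVerts d) (hy0 : y ≠ 0) (hS : S ⊆ X \ {0, y})
    (h : IsExtreme ℝ (convexHull ℝ X) (segment ℝ 0 y)) : y ∉ coneHull S := by
  rintro ⟨s, lam, hs, hlam, hys⟩
  obtain ⟨i, hi⟩ := exists_eq_one_of_mem_cubeVerts hy hy0
  have hmass : 1 ≤ ∑ z ∈ s, lam z := calc
    1 = ∑ z ∈ s, lam z * z i := by simp [← hi, hys, Finset.sum_apply]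
    _ ≤ ∑ z ∈ s, lam z := sum_le_sum fun z hz =>
      mul_le_of_le_one_right (hlam z hz) (le_one_of_mem_cubeVerts (hX (hS (hs hz)).1) i)
  have hcm : s.centerMass lam id ∈ segment ℝ 0 y := by
    refine ⟨1 - (∑ z ∈ s, lam z)⁻¹, (∑ z ∈ s, lam z)⁻¹, sub_nonneg.2 (inv_le_one_of_one_le₀ hmass),
      inv_nonneg.2 (zero_le_one.trans hmass), sub_add_cancel _ _, ?_⟩
    simp [centerMass, hys]
  obtain ⟨z, hz, hlz⟩ : ∃ z ∈ s, 0 < lam z := by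
    by_contra! hle
    refine hy0 (hys.trans (sum_eq_zero fun z hz => ?_))
    rw [le_antisymm (hle z hz) (hlam z hz), zero_smul]
  have hzS := hS (hs hz)
  have hz_seg : z ∈ segment ℝ 0 y := h.mem_of_centerMass_mem (convex_convexHull ℝ X) hlam
    (fun z hz => subset_convexHull ℝ X (hS (hs hz)).1) hcm hz hlz
  rcases eq_zero_or_eq_of_mem_segment_of_mem_cubeVerts (hX hzS.1) hy hz_seg with rfl | rfl <;>
    simp at hzS

theorem isExtreme_segment_of_notMem_coneHull {X : Set (Fin d → ℝ)} (hX : X ⊆ cubeVerts d)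
    (h0 : 0 ∈ X) (hy : y ∈ X) (hy0 : y ≠ 0)
    (h : y ∉ coneHull {z ∈ X | (∀ i, z i ≤ y i) ∧ z ≠ 0 ∧ z ≠ y}) :
    IsExtreme ℝ (convexHull ℝ X) (segment ℝ 0 y) := by
  have hyS : y ∉ PointedCone.hull ℝ (X \ {0, y}) := by
    rw [← SetLike.mem_coe, ← coneHull_eq_hull]
    intro hyS
    obtain ⟨s, lam, hs, hlam, hys⟩ :=
      mem_coneHull_sep_le_of_mem_coneHull (Set.sdiff_subset.trans hX) (hX hy) hyS
    refine h ⟨s, lam, fun z hz => ?_, hlam, hys⟩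
    obtain ⟨⟨hzX, hz0y⟩, hzy⟩ := hs hz
    simp only [Set.mem_insert_iff, Set.mem_singleton_iff, not_or] at hz0y
    exact ⟨hzX, hzy, hz0y⟩
  obtain ⟨l, hly, hlS⟩ := exists_linearMap_eq_zero_and_neg_of_notMem_hull
    (∑ i, LinearMap.proj i) (cubeVerts_finite.subset (Set.sdiff_subset.trans hX))
    (fun z hz => by simpa using sum_pos_of_mem_cubeVerts (hX hz.1) fun h => hz.2 (Or.inl h))
    (by simpa using sum_pos_of_mem_cubeVerts (hX hy) hy0) hyS
  have hlX : ∀ x ∈ X, l x ≤ 0 := by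
    intro x hx
    by_cases hx0y : x ∈ ({0, y} : Set _)
    · rcases hx0y with rfl | rfl
      · rw [map_zero]
      · exact hly.le
    · exact (hlS x ⟨hx, hx0y⟩).le
  have hlevel : {x ∈ X | l x = 0} = {0, y} := by
    refine Set.Subset.antisymm (fun x hx => by_contra fun hx0y => (hlS x ⟨hx.1, hx0y⟩).ne hx.2) ?_
    rintro x (rfl | rfl)
    exacts [⟨h0, map_zero l⟩, ⟨hy, hly⟩]
  simpa [hlevel, convexHull_pair] using isExtreme_convexHull_of_forall_le l hlX

end CubeVertices

/-- For `X ⊆ {0,1}^d` with `0, y ∈ X`, the segment `{0, y}` is an edge of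
`conv X` iff `y ∉ cone(Z)` where `Z = {z ∈ X | z ≤ y, z ≠ 0, z ≠ y}`. -/
theorem stmt4 {d : ℕ} (X : Set (Fin d → ℝ)) (hX : X ⊆ cubeVerts d)
    (h0 : (0 : Fin d → ℝ) ∈ X) (y : Fin d → ℝ) (hy : y ∈ X) (hy0 : y ≠ 0) :
    IsExtreme ℝ (convexHull ℝ X) (segment ℝ 0 y) ↔
      y ∉ coneHull {z ∈ X | (∀ i, z i ≤ y i) ∧ z ≠ 0 ∧ z ≠ y} :=
  ⟨notMem_coneHull_of_isExtreme_segment hX (hX hy) hy0 fun _ hz =>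
      ⟨hz.1, by simp [hz.2.2.1, hz.2.2.2]⟩,
    isExtreme_segment_of_notMem_coneHull hX h0 hy hy0⟩
end
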